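/- arXiv:2106.12725 — 2 statements merged into one kernel-verified Lean document; each statement's English description precedes it below -/
import Mathlib

section
/- For every j ∈ R with j−1 ∈ R (i.e., j ∈ R ∖ R′), it holds: L-root(j−1) = L-root(j), rend(j−1) = rend(j), L-tail(j−1) = L-tail(j), rendfull(j−1) = rendfull(j), and type(j−1) = type(j). -/
open scoped Classical

namespace CSA

/-- Character of a 1-indexed string at position `i` (junk value 0 out of range). -/
def idx (S : List ℕ) (i : ℕ) : ℕ := S.getD (i - 1) 0

/-- Substring `S[i..j)` in the 1-indexed, half-open convention. -/
def sub (S : List ℕ) (i j : ℕ) : List ℕ := (S.drop (i - 1)).take (j - i)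

/-- Suffix `S[i..|S|]` (1-indexed). -/
def suf (S : List ℕ) (i : ℕ) : List ℕ := S.drop (i - 1)

/-- Length of the longest common prefix of two strings. -/
def lcp (A B : List ℕ) : ℕ := ((A.zip B).takeWhile fun p => p.1 == p.2).length

/-- `LCE T j₁ j₂` is the length of the longest common prefix of `T[j₁..n]` and `T[j₂..n]`. -/
def LCE (T : List ℕ) (j₁ j₂ : ℕ) : ℕ := lcp (suf T j₁) (suf T j₂)

/-- `p` is a period of `S`. -/
def IsPeriod (S : List ℕ) (p : ℕ) : Prop :=
  1 ≤ p ∧ p ≤ S.length ∧ ∀ i, i + p < S.length → S.getD i 0 = S.getD (i + p) 0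

/-- The shortest period of `S`. -/
noncomputable def per (S : List ℕ) : ℕ := sInf {p | IsPeriod S p}

/-- `R = {i ∈ [1..n−3τ+2] : per(T[i..i+3τ−1)) ≤ τ/3}`. -/
noncomputable def R (T : List ℕ) (τ : ℕ) : Set ℕ :=
  {i | 1 ≤ i ∧ i + 3 * τ ≤ T.length + 2 ∧ 3 * per (sub T i (i + 3 * τ - 1)) ≤ τ}

/-- `rend(j) = min{j′ ≥ j : j′ ∉ R} + 3τ − 2`. -/
noncomputable def rend (T : List ℕ) (τ j : ℕ) : ℕ :=
  sInf {j' | j ≤ j' ∧ j' ∉ R T τ} + 3 * τ - 2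

/-- `L-root(j)`: lexicographically smallest among `{T[j+t..j+t+p) : 0 ≤ t < p}`
where `p = per(T[j..j+3τ−1))`. -/
noncomputable def Lroot (T : List ℕ) (τ j : ℕ) : List ℕ :=
  (((Finset.range (per (sub T j (j + 3 * τ - 1)))).image fun t =>
      sub T (j + t) (j + t + per (sub T j (j + 3 * τ - 1)))).min).untopD []

/-- `L-head(j)`: the (unique) `s ∈ [0..p)` with `T[j+s..j+s+p) = L-root(j)`. -/
noncomputable def Lhead (T : List ℕ) (τ j : ℕ) : ℕ :=
  sInf {s | s < per (sub T j (j + 3 * τ - 1)) ∧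
    sub T (j + s) (j + s + per (sub T j (j + 3 * τ - 1))) = Lroot T τ j}

noncomputable def Lexp (T : List ℕ) (τ j : ℕ) : ℕ :=
  (rend T τ j - j - Lhead T τ j) / per (sub T j (j + 3 * τ - 1))

noncomputable def Ltail (T : List ℕ) (τ j : ℕ) : ℕ :=
  (rend T τ j - j - Lhead T τ j) % per (sub T j (j + 3 * τ - 1))

noncomputable def rendfull (T : List ℕ) (τ j : ℕ) : ℕ := rend T τ j - Ltail T τ j

/-- `type(j) = +1` if `rend(j) ≤ n` and `T[rend(j)] > T[rend(j)−p]`, and `−1` otherwise. -/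
noncomputable def typ (T : List ℕ) (τ j : ℕ) : ℤ :=
  if rend T τ j ≤ T.length ∧
      idx T (rend T τ j - per (sub T j (j + 3 * τ - 1))) < idx T (rend T τ j)
    then 1 else -1

noncomputable def Rminus (T : List ℕ) (τ : ℕ) : Set ℕ := {j ∈ R T τ | typ T τ j = -1}

noncomputable def RH (T : List ℕ) (τ : ℕ) (H : List ℕ) : Set ℕ :=
  {j ∈ R T τ | Lroot T τ j = H}

noncomputable def RsH (T : List ℕ) (τ s : ℕ) (H : List ℕ) : Set ℕ :=
  {j ∈ R T τ | Lroot T τ j = H ∧ Lhead T τ j = s}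

noncomputable def RminusH (T : List ℕ) (τ : ℕ) (H : List ℕ) : Set ℕ :=
  Rminus T τ ∩ RH T τ H

noncomputable def RminusSH (T : List ℕ) (τ s : ℕ) (H : List ℕ) : Set ℕ :=
  Rminus T τ ∩ RsH T τ s H

noncomputable def Rprime (T : List ℕ) (τ : ℕ) : Set ℕ := {j ∈ R T τ | j - 1 ∉ R T τ}

/-- `Occ(P,S)`: the set of (1-indexed) starting positions of occurrences of `P` in `S`. -/
def OccSet (P S : List ℕ) : Set ℕ :=
  {j | 1 ≤ j ∧ j + P.length ≤ S.length + 1 ∧ sub S j (j + P.length) = P}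

noncomputable def RangeBeg (P T : List ℕ) : ℕ :=
  Set.ncard {i | 1 ≤ i ∧ i ≤ T.length ∧ suf T i < P}

noncomputable def RangeEnd (P T : List ℕ) : ℕ := RangeBeg P T + (OccSet P T).ncard

/-- `ISA[j]`: the lexicographic rank of the suffix `T[j..n]` among all suffixes of `T`. -/
noncomputable def ISA (T : List ℕ) (j : ℕ) : ℕ :=
  Set.ncard {j' | 1 ≤ j' ∧ j' ≤ T.length ∧ suf T j' ≤ suf T j}

/-- `succ_S(i) = min{j ∈ S ∪ {n−2τ+2} : j ≥ i}`. -/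
noncomputable def succS (T : List ℕ) (τ : ℕ) (Sync : Set ℕ) (i : ℕ) : ℕ :=
  sInf {j | i ≤ j ∧ (j ∈ Sync ∨ j = T.length + 2 - 2 * τ)}

/-- The set `D` of distinguishing prefixes. -/
noncomputable def Dset (T : List ℕ) (τ : ℕ) (Sync : Set ℕ) : Set (List ℕ) :=
  {X | ∃ i, 1 ≤ i ∧ i + 3 * τ ≤ T.length + 2 ∧ i ∉ R T τ ∧
    X = sub T i (succS T τ Sync i + 2 * τ)}

/-- `T^∞[i] = T[1 + ((i−1) mod n)]` for `i : ℤ`. -/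
def tinf (T : List ℕ) (i : ℤ) : ℕ := idx T (((i - 1).emod (T.length : ℤ)).toNat + 1)

/-- `W[i]`: the reverse of `T^∞[s^lex_i − τ .. s^lex_i + 2τ)`. -/
def Wstr (T : List ℕ) (τ : ℕ) (slex : ℕ → ℕ) (i : ℕ) : List ℕ :=
  ((List.range (3 * τ)).map fun k => tinf T ((slex i : ℤ) - (τ : ℤ) + (k : ℤ))).reverse

/- Pattern versions of the `L`-decomposition functions. -/

noncomputable def perP (τ : ℕ) (P : List ℕ) : ℕ := per (P.take (3 * τ - 1))

/-- A pattern is periodic if `|P| ≥ 3τ−1` and `per(P[1..3τ−1]) ≤ τ/3`. -/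
noncomputable def Periodic (τ : ℕ) (P : List ℕ) : Prop :=
  3 * τ - 1 ≤ P.length ∧ 3 * perP τ P ≤ τ

noncomputable def pend (τ : ℕ) (P : List ℕ) : ℕ :=
  1 + perP τ P + lcp P (P.drop (perP τ P))

noncomputable def LrootP (τ : ℕ) (P : List ℕ) : List ℕ :=
  (((Finset.range (perP τ P)).image fun t => (P.drop t).take (perP τ P)).min).untopD []

noncomputable def LheadP (τ : ℕ) (P : List ℕ) : ℕ :=
  sInf {s | s < perP τ P ∧ (P.drop s).take (perP τ P) = LrootP τ P}

noncomputable def LexpP (τ : ℕ) (P : List ℕ) : ℕ :=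
  (pend τ P - 1 - LheadP τ P) / perP τ P

noncomputable def LtailP (τ : ℕ) (P : List ℕ) : ℕ :=
  (pend τ P - 1 - LheadP τ P) % perP τ P

noncomputable def pendfullP (τ : ℕ) (P : List ℕ) : ℕ := pend τ P - LtailP τ P

noncomputable def typP (τ : ℕ) (P : List ℕ) : ℤ :=
  if pend τ P ≤ P.length ∧ idx P (pend τ P - perP τ P) < idx P (pend τ P)
    then 1 else -1

/-- `pow(H)`: the prefix of length `|H|·⌈τ/|H|⌉` of `H^∞`. -/
def powS (τ : ℕ) (H : List ℕ) : List ℕ :=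
  (List.replicate ((τ + H.length - 1) / H.length) H).flatten

/-!
Write `p` for the smallest period of the window `T[j..j+3τ−1)`. The smallest periods of two
windows of length `3τ − 1` starting one position apart and both at most `τ/3` coincide, because
each of them is transported into the other window by a detour through the overlap; so
`T[j−1..j+3τ−1)` has period `p`. The `p` factors of length `p` starting in `[j−1, j−1+p)` are then
those starting in `[j, j+p)`, rotated by one, which gives the same `L-root`. They are pairwise
distinct, since two equal ones at distance `d` would produce, by the Fine–Wilf argument, the
period `gcd d p < p` of the window; hence `L-head` moves by one modulo `p` and `L-tail` is
unchanged. Finally `rend` agrees because `j − 1 ∈ R`, and `type` depends only on `rend` and `p`.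
-/

section PeriodicOn

variable {α : Type*} {f : ℕ → α} {a b p q : ℕ}

def PeriodicOn (f : ℕ → α) (a b p : ℕ) : Prop :=
  ∀ i, a ≤ i → i + p < b → f i = f (i + p)

theorem PeriodicOn.mono (h : PeriodicOn f a b p) {a' b' : ℕ} (ha : a ≤ a') (hb : b' ≤ b) :
    PeriodicOn f a' b' p :=
  fun i hi hib => h i (ha.trans hi) (by omega)

theorem PeriodicOn.sub (hp : PeriodicOn f a b p) (hq : PeriodicOn f a b q) (hpq : p ≤ q)
    (hb : a + p + q ≤ b) : PeriodicOn f a b (q - p) := by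
  intro i hai hib
  by_cases hc : i + q < b
  · rw [hq i hai hc, hp (i + (q - p)) (by omega) (by omega)]
    congr 1; omega
  · have h1 := hp (i - p) (by omega) (by omega)
    rw [Nat.sub_add_cancel (by omega)] at h1
    rw [← h1, hq (i - p) (by omega) (by omega)]
    congr 1; omega

/-- The weak Fine–Wilf theorem, by Euclid's algorithm on the two periods. -/
theorem PeriodicOn.gcd (hp : PeriodicOn f a b p) (hq : PeriodicOn f a b q)
    (hb : a + p + q ≤ b) : PeriodicOn f a b (Nat.gcd p q) := by
  induction h : p + q using Nat.strong_induction_on generalizing p q with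
  | _ N ih =>
    rcases Nat.eq_zero_or_pos p with rfl | hp0
    · simpa using hq
    rcases Nat.eq_zero_or_pos q with rfl | hq0
    · simpa using hp
    rcases le_total p q with hpq | hqp
    · rw [← Nat.gcd_sub_self_right hpq]
      exact ih _ (by omega) hp (hp.sub hq hpq hb) (by omega) rfl
    · rw [← Nat.gcd_sub_self_left hqp]
      exact ih _ (by omega) (hq.sub hp hqp (by omega)) hq (by omega) rfl

theorem PeriodicOn.of_core {c g : ℕ} (hp : PeriodicOn f a b p) (hg : PeriodicOn f c (c + p + g) g)
    (hac : a ≤ c) (hca : c < a + p) (hcb : c + p + g ≤ b) : PeriodicOn f a b g := by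
  intro i
  induction i using Nat.strong_induction_on with
  | _ i ih =>
    intro hai hib
    by_cases hlo : i < c
    · rw [hp i hai (by omega), hp (i + g) (by omega) (by omega), hg (i + p) (by omega) (by omega)]
      congr 1; omega
    by_cases hhi : i < c + p
    · exact hg i (by omega) (by omega)
    · have h1 := hp (i - p) (by omega) (by omega)
      have h2 := hp (i - p + g) (by omega) (by omega)
      rw [Nat.sub_add_cancel (by omega)] at h1
      rw [← h1, ih (i - p) (by omega) (by omega) (by omega), h2]
      congr 1; omega

/-- Two equal factors of length `p` at distance `d < p` would yield the period `gcd d p < p`. -/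
theorem PeriodicOn.eq_of_shift_eq (hp : PeriodicOn f a b p)
    (hmin : ∀ q, 1 ≤ q → PeriodicOn f a b q → p ≤ q) (hb : a + 3 * p ≤ b) {s t : ℕ}
    (hs : s < p) (ht : t < p) (hst : ∀ k < p, f (a + s + k) = f (a + t + k)) : s = t := by
  wlog hle : s ≤ t generalizing s t
  · exact (this ht hs (fun k hk => (hst k hk).symm) (by omega)).symm
  by_contra hne
  set d := t - s
  have hd : PeriodicOn f (a + s) (a + s + p + d) d := fun i hi hid => by
    have := hst (i - (a + s)) (by omega)
    rwa [show a + s + (i - (a + s)) = i by omega,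
      show a + t + (i - (a + s)) = i + d by omega] at this
  have hgcd := hd.gcd (hp.mono (by omega) (by omega)) (by omega)
  have hg1 : 1 ≤ Nat.gcd d p := Nat.gcd_pos_of_pos_left _ (by omega)
  have hgd : Nat.gcd d p ≤ d := Nat.gcd_le_left _ (by omega)
  have := hmin _ hg1 (hp.of_core (hgcd.mono le_rfl (by omega)) (by omega) (by omega) (by omega))
  omega

theorem PeriodicOn.of_succ (hp : PeriodicOn f a b p) (hq : PeriodicOn f (a + 1) (b + 1) q)
    (hp1 : 1 ≤ p) (hb : a + p + q < b) : PeriodicOn f a b q := by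
  intro i hai hib
  rcases Nat.eq_or_lt_of_le hai with hia | hlt
  · rw [hp i hai (by omega), hq (i + p) (by omega) (by omega), hp (i + q) (by omega) (by omega)]
    congr 1; omega
  · exact hq i hlt (by omega)

theorem PeriodicOn.succ (hp : PeriodicOn f a b p) (hq : PeriodicOn f (a + 1) (b + 1) q)
    (hq1 : 1 ≤ q) (hb : a + p + q < b) : PeriodicOn f (a + 1) (b + 1) p := by
  intro i hai hib
  by_cases hc : i + p < b
  · exact hp i (by omega) hc
  · have h1 := hq (i - q) (by omega) (by omega)
    rw [Nat.sub_add_cancel (by omega)] at h1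
    rw [← h1, hp (i - q) (by omega) (by omega), hq (i - q + p) (by omega) (by omega)]
    congr 1; omega

theorem PeriodicOn.extend_succ (h : PeriodicOn f a b p) (h' : PeriodicOn f (a + 1) (b + 1) p)
    (hb : a + p < b) : PeriodicOn f a (b + 1) p := by
  intro i hai hib
  rcases Nat.eq_or_lt_of_le hai with hia | hlt
  · exact h i hai (by omega)
  · exact h' i hlt hib

end PeriodicOn

section Finset

variable {β : Type*} {W : ℕ → β} {a p : ℕ}

theorem image_range_succ_eq [DecidableEq β] (hW : W a = W (a + p)) :
    (Finset.range p).image (fun t => W (a + t)) =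
      (Finset.range p).image (fun t => W (a + 1 + t)) := by
  ext X
  simp only [Finset.mem_image, Finset.mem_range]
  constructor
  · rintro ⟨t, ht, rfl⟩
    rcases Nat.eq_zero_or_pos t with rfl | ht0
    · exact ⟨p - 1, by omega, by rw [add_zero, hW]; congr 1; omega⟩
    · exact ⟨t - 1, by omega, by congr 1; omega⟩
  · rintro ⟨t, ht, rfl⟩
    by_cases htp : t + 1 < p
    · exact ⟨t + 1, htp, by congr 1; omega⟩
    · exact ⟨0, by omega, by rw [add_zero, hW]; congr 1; omega⟩

theorem sInf_shift_eq {H : β} {s : ℕ} (hW : W a = W (a + p))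
    (hinj : ∀ s t, s < p → t < p → W (a + s) = W (a + t) → s = t)
    (hs : s < p) (hH : W (a + 1 + s) = H) :
    sInf {t | t < p ∧ W (a + t) = H} = (s + 1) % p := by
  have hmem : (s + 1) % p < p ∧ W (a + (s + 1) % p) = H := by
    refine ⟨Nat.mod_lt _ (by omega), ?_⟩
    rcases Nat.lt_or_ge (s + 1) p with hlt | hge
    · rw [Nat.mod_eq_of_lt hlt, ← hH, add_comm s, add_assoc]
    · rw [show s + 1 = p by omega, Nat.mod_self, add_zero, hW, ← hH]
      congr 1; omega
  have hset : {t | t < p ∧ W (a + t) = H} = {(s + 1) % p} := by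
    ext t
    simp only [Set.mem_ofPred_eq, Set.mem_singleton_iff]
    exact ⟨fun ht => hinj _ _ ht.1 hmem.1 (ht.2.trans hmem.2.symm), fun ht => ht ▸ hmem⟩
  rw [hset, csInf_singleton]

end Finset

theorem sub_mod_succ_eq {r i s p : ℕ} (hs : s < p) (hr : i + 1 + s ≤ r) :
    (r - i - (s + 1) % p) % p = (r - (i + 1) - s) % p := by
  rcases Nat.lt_or_ge (s + 1) p with hlt | hge
  · rw [Nat.mod_eq_of_lt hlt]
    congr 1; omega
  · rw [show s + 1 = p by omega, Nat.mod_self, show r - i - 0 = r - (i + 1) - s + p by omega,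
      Nat.add_mod_right]

theorem per_le {S : List ℕ} {p : ℕ} (h : IsPeriod S p) : per S ≤ p := Nat.sInf_le h

section Run

variable {T : List ℕ} {τ i : ℕ}

theorem sub_eq_map_range {x L : ℕ} (hx : 1 ≤ x) (hL : x + L ≤ T.length + 1) :
    sub T x (x + L) = (List.range L).map fun k => T.getD (x - 1 + k) 0 := by
  unfold sub
  rw [Nat.add_sub_cancel_left]
  apply List.ext_getElem
  · simp only [List.length_take, List.length_drop, List.length_map, List.length_range]
    omega
  · intro k h1 h2
    simp only [List.getElem_take, List.getElem_drop, List.getElem_map, List.getElem_range]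
    rw [List.getD_eq_getElem _ _ (by simp at h1 ⊢; omega)]

theorem isPeriod_sub_iff {x L p : ℕ} (hx : 1 ≤ x) (hL : x + L ≤ T.length + 1) :
    IsPeriod (sub T x (x + L)) p ↔
      1 ≤ p ∧ p ≤ L ∧ PeriodicOn (T.getD · 0) (x - 1) (x - 1 + L) p := by
  rw [sub_eq_map_range hx hL]
  simp only [IsPeriod, List.length_map, List.length_range]
  refine and_congr_right fun _ => and_congr_right fun _ => ⟨fun h i hi hip => ?_, fun h i hip => ?_⟩
  · have := h (i - (x - 1)) (by omega)
    simp only [List.getD_eq_getElem?_getD, List.getElem?_map, List.getElem?_range,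
      show i - (x - 1) < L by omega, show i - (x - 1) + p < L by omega] at this
    simpa [show x - 1 + (i - (x - 1)) = i by omega, show x - 1 + (i - (x - 1) + p) = i + p by omega]
      using this
  · simp only [List.getD_eq_getElem?_getD, List.getElem?_map, List.getElem?_range,
      show i < L by omega, hip]
    simpa [add_assoc] using h (x - 1 + i) (by omega) (by omega)

theorem isPeriod_window_iff (hτ : 1 ≤ τ) (hi : i ∈ R T τ) {p : ℕ} :
    IsPeriod (sub T i (i + 3 * τ - 1)) p ↔
      1 ≤ p ∧ p ≤ 3 * τ - 1 ∧ PeriodicOn (T.getD · 0) (i - 1) (i - 1 + (3 * τ - 1)) p := by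
  obtain ⟨hi1, hilen, -⟩ := hi
  rw [show i + 3 * τ - 1 = i + (3 * τ - 1) by omega]
  exact isPeriod_sub_iff hi1 (by omega)

theorem isPeriod_per_window (hτ : 1 ≤ τ) (hi : i ∈ R T τ) :
    IsPeriod (sub T i (i + 3 * τ - 1)) (per (sub T i (i + 3 * τ - 1))) :=
  Nat.sInf_mem (s := {p | IsPeriod (sub T i (i + 3 * τ - 1)) p})
    ⟨3 * τ - 1, (isPeriod_window_iff hτ hi).2 ⟨by omega, le_rfl, fun _ _ _ => by omega⟩⟩

theorem per_window_le (hτ : 1 ≤ τ) (hi : i ∈ R T τ) {q : ℕ} (hq : 1 ≤ q)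
    (h : PeriodicOn (T.getD · 0) (i - 1) (i - 1 + (3 * τ - 1)) q) :
    per (sub T i (i + 3 * τ - 1)) ≤ q := by
  by_cases hqτ : q ≤ 3 * τ - 1
  · exact per_le ((isPeriod_window_iff hτ hi).2 ⟨hq, hqτ, h⟩)
  · have := hi.2.2
    omega

theorem sub_eq_sub_iff {x y L : ℕ} (hx : 1 ≤ x) (hy : 1 ≤ y) (hxL : x + L ≤ T.length + 1)
    (hyL : y + L ≤ T.length + 1) :
    sub T x (x + L) = sub T y (y + L) ↔ ∀ k < L, T.getD (x - 1 + k) 0 = T.getD (y - 1 + k) 0 := by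
  simp only [sub_eq_map_range hx hxL, sub_eq_map_range hy hyL, List.map_inj_left, List.mem_range]

theorem rend_eq_rend_succ (hi : i ∈ R T τ) : rend T τ i = rend T τ (i + 1) := by
  have hset : {j' | i ≤ j' ∧ j' ∉ R T τ} = {j' | i + 1 ≤ j' ∧ j' ∉ R T τ} := by
    ext j'
    simp only [Set.mem_ofPred_eq]
    refine ⟨fun ⟨hij, hj'⟩ => ⟨?_, hj'⟩, fun ⟨hij, hj'⟩ => ⟨by omega, hj'⟩⟩
    rcases Nat.eq_or_lt_of_le hij with rfl | hlt
    · exact absurd hi hj'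
    · exact hlt
  unfold rend
  rw [hset]

theorem le_rend (hτ : 1 ≤ τ) : i + 3 * τ - 2 ≤ rend T τ i := by
  have hne : {j' | i ≤ j' ∧ j' ∉ R T τ}.Nonempty :=
    ⟨i + T.length + 2, by omega, fun h => by have := h.2.1; omega⟩
  have := (Nat.sInf_mem hne).1
  unfold rend
  omega

theorem per_window_succ (hτ : 1 ≤ τ) (hi : i ∈ R T τ) (hi' : i + 1 ∈ R T τ) :
    per (sub T (i + 1) (i + 1 + 3 * τ - 1)) = per (sub T i (i + 3 * τ - 1)) := by
  obtain ⟨hA1, -, hA⟩ := (isPeriod_window_iff hτ hi).1 (isPeriod_per_window hτ hi)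
  obtain ⟨hB1, -, hB⟩ := (isPeriod_window_iff hτ hi').1 (isPeriod_per_window hτ hi')
  have := hi.1
  have := hi.2.2
  have := hi'.2.2
  have hB' := hB.mono (a' := i - 1 + 1) (b' := i - 1 + (3 * τ - 1) + 1) (by omega) (by omega)
  apply le_antisymm
  · exact per_window_le hτ hi' hA1 ((hA.succ hB' hB1 (by omega)).mono (by omega) (by omega))
  · exact per_window_le hτ hi hB1 (hA.of_succ hB' hA1 (by omega))

theorem periodicOn_run (hτ : 1 ≤ τ) (hi : i ∈ R T τ) (hi' : i + 1 ∈ R T τ) :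
    PeriodicOn (T.getD · 0) (i - 1) (i - 1 + 3 * τ) (per (sub T i (i + 3 * τ - 1))) := by
  obtain ⟨-, -, hA⟩ := (isPeriod_window_iff hτ hi).1 (isPeriod_per_window hτ hi)
  obtain ⟨-, -, hB⟩ := (isPeriod_window_iff hτ hi').1 (isPeriod_per_window hτ hi')
  rw [per_window_succ hτ hi hi'] at hB
  have := hi.1
  have := hi.2.2
  exact (hA.extend_succ (hB.mono (by omega) (by omega)) (by omega)).mono le_rfl (by omega)

theorem sub_eq_sub_add_per (hτ : 1 ≤ τ) (hi : i ∈ R T τ) (hi' : i + 1 ∈ R T τ) :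
    sub T i (i + per (sub T i (i + 3 * τ - 1))) =
      sub T (i + per (sub T i (i + 3 * τ - 1)))
        (i + per (sub T i (i + 3 * τ - 1)) + per (sub T i (i + 3 * τ - 1))) := by
  obtain ⟨hi1, -, hper⟩ := hi
  have := hi'.2.1
  refine (sub_eq_sub_iff hi1 (by omega) (by omega) (by omega)).2 fun k hk => ?_
  exact (periodicOn_run hτ ⟨hi1, by omega, hper⟩ hi' (i - 1 + k) (by omega) (by omega)).trans
    (congrArg (T.getD · 0) (by omega))

theorem eq_of_sub_eq_sub (hτ : 1 ≤ τ) (hi : i ∈ R T τ) (hi' : i + 1 ∈ R T τ) {s t : ℕ}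
    (hs : s < per (sub T i (i + 3 * τ - 1))) (ht : t < per (sub T i (i + 3 * τ - 1)))
    (hst : sub T (i + s) (i + s + per (sub T i (i + 3 * τ - 1))) =
      sub T (i + t) (i + t + per (sub T i (i + 3 * τ - 1)))) : s = t := by
  obtain ⟨hi1, -, hper⟩ := hi
  have := hi'.2.1
  have hst' := (sub_eq_sub_iff (by omega) (by omega) (by omega) (by omega)).1 hst
  refine (periodicOn_run hτ ⟨hi1, by omega, hper⟩ hi').eq_of_shift_eq
    (fun q hq1 hq => per_window_le hτ ⟨hi1, by omega, hper⟩ hq1 (hq.mono le_rfl (by omega)))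
    (by omega) hs ht fun k hk => ?_
  rw [show i - 1 + s + k = i + s - 1 + k by omega, show i - 1 + t + k = i + t - 1 + k by omega]
  exact hst' k hk

theorem Lroot_eq_succ (hτ : 1 ≤ τ) (hi : i ∈ R T τ) (hi' : i + 1 ∈ R T τ) :
    Lroot T τ i = Lroot T τ (i + 1) := by
  have hW := image_range_succ_eq (W := fun x => sub T x (x + per (sub T i (i + 3 * τ - 1))))
    (sub_eq_sub_add_per hτ hi hi')
  unfold Lroot
  rw [per_window_succ hτ hi hi', hW]

theorem Lhead_spec (hτ : 1 ≤ τ) (hi : i ∈ R T τ) :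
    Lhead T τ i < per (sub T i (i + 3 * τ - 1)) ∧
      sub T (i + Lhead T τ i) (i + Lhead T τ i + per (sub T i (i + 3 * τ - 1))) = Lroot T τ i := by
  set p := per (sub T i (i + 3 * τ - 1))
  have hp1 : 1 ≤ p := ((isPeriod_window_iff hτ hi).1 (isPeriod_per_window hτ hi)).1
  set roots := (Finset.range p).image fun t => sub T (i + t) (i + t + p)
  have hne : roots.Nonempty := ⟨_, Finset.mem_image_of_mem _ (Finset.mem_range.2 hp1)⟩
  have hmem : Lroot T τ i ∈ roots := by
    unfold Lroot
    rw [← Finset.coe_min' hne, WithTop.untopD_coe]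
    exact Finset.min'_mem _ _
  obtain ⟨t, ht, hroot⟩ := Finset.mem_image.1 hmem
  exact Nat.sInf_mem (s := {s | s < p ∧ sub T (i + s) (i + s + p) = Lroot T τ i})
    ⟨t, Finset.mem_range.1 ht, hroot⟩

theorem Lhead_eq_succ (hτ : 1 ≤ τ) (hi : i ∈ R T τ) (hi' : i + 1 ∈ R T τ) :
    Lhead T τ i = (Lhead T τ (i + 1) + 1) % per (sub T i (i + 3 * τ - 1)) := by
  obtain ⟨hs, hroot⟩ := Lhead_spec hτ hi'
  rw [per_window_succ hτ hi hi'] at hs hroot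
  rw [← Lroot_eq_succ hτ hi hi'] at hroot
  exact sInf_shift_eq (W := fun x => sub T x (x + per (sub T i (i + 3 * τ - 1))))
    (sub_eq_sub_add_per hτ hi hi') (fun _ _ hs ht => eq_of_sub_eq_sub hτ hi hi' hs ht) hs hroot

theorem Ltail_eq_succ (hτ : 1 ≤ τ) (hi : i ∈ R T τ) (hi' : i + 1 ∈ R T τ) :
    Ltail T τ i = Ltail T τ (i + 1) := by
  obtain ⟨hs, -⟩ := Lhead_spec hτ hi'
  rw [per_window_succ hτ hi hi'] at hs
  have := le_rend hτ (T := T) (i := i + 1)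
  have := hi.2.2
  unfold Ltail
  rw [Lhead_eq_succ hτ hi hi', rend_eq_rend_succ hi, per_window_succ hτ hi hi']
  exact sub_mod_succ_eq hs (by omega)

end Run

theorem statement_2_general
    (τ : ℕ) (T : List ℕ)
    (hτ : 1 ≤ τ)
    (j : ℕ) (hj : j ∈ R T τ) (hj' : j - 1 ∈ R T τ) :
    Lroot T τ (j - 1) = Lroot T τ j ∧
    rend T τ (j - 1) = rend T τ j ∧
    Ltail T τ (j - 1) = Ltail T τ j ∧
    rendfull T τ (j - 1) = rendfull T τ j ∧
    typ T τ (j - 1) = typ T τ j := by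
  obtain ⟨i, rfl⟩ : ∃ i, j = i + 1 := ⟨j - 1, by have := hj.1; omega⟩
  rw [Nat.add_sub_cancel] at hj' ⊢
  have hrend := rend_eq_rend_succ hj'
  have hLtail := Ltail_eq_succ hτ hj' hj
  refine ⟨Lroot_eq_succ hτ hj' hj, hrend, hLtail, by rw [rendfull, rendfull, hrend, hLtail], ?_⟩
  unfold typ
  rw [hrend, per_window_succ hτ hj' hj]

/-- Lemma: positions in the same run share their L-decomposition data. -/
theorem statement_2
    (σ n τ : ℕ) (T : List ℕ)
    (hσ : 2 ≤ σ) (hn : 2 ≤ n) (hτ : 1 ≤ τ)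
    (hlen : T.length = n) (halph : ∀ c ∈ T, c < σ)
    (hlast : idx T n = 0) (huniq : ∀ i, 1 ≤ i → i < n → idx T i ≠ 0)
    (j : ℕ) (hj : j ∈ R T τ) (hj' : j - 1 ∈ R T τ) :
    Lroot T τ (j - 1) = Lroot T τ j ∧
    rend T τ (j - 1) = rend T τ j ∧
    Ltail T τ (j - 1) = Ltail T τ j ∧
    rendfull T τ (j - 1) = rendfull T τ j ∧
    typ T τ (j - 1) = typ T τ j :=
  statement_2_general τ T hτ j hj hj'
end CSA
end

section
/- Let P be a periodic pattern of length m over {0,…,σ−1}, and let s = L-head(P) and H = L-root(P). For every j ∈ [1..n], the longest common prefix of P and T[j..n] has length ≥ 3τ−1 if and only if j ∈ R_{s,H}. Moreover, if j ∈ R_{s,H} then, letting t = pend(P) − 1 and t′ = rend(j) − j, the longest common prefix of P and T[j..n] has length ≥ min(t,t′) and: (1) if type(P) ≠ type(j), then P ≺ T[j..n] if and only if type(P) < type(j); (2) if type(P) = type(j) = −1 and t ≠ t′, then P ≺ T[j..n] if and only if t < t′; (3) if type(P) = type(j) = +1 and t ≠ t′, then P ≺ T[j..n] if and only if t > t′;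 (4) if type(P) ≠ type(j) or t ≠ t′, then P ≠ T[j..n] and the longest common prefix of P and T[j..n] has length exactly min(t,t′). -/
/-!
The pattern and the suffix `T[j..n]` are both governed by the period of their first `3τ - 1`
symbols, and the L-root together with the L-head determines this prefix: two periodic strings
with the same root and head agree on it, since both repeat the root from the head on.

Each string then keeps its period `p` up to a maximal position, `pend(P) - 1` resp. `rend(j) - j`,
where it either ends or breaks the period with a smaller or a larger symbol; the type records
which. The two strings agree up to the earlier of these positions and are compared right there:
the string whose run ends first is the smaller one exactly when its run ends downwards (or with
the string itself), and when both runs end together their types decide.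

On the text side the run is found by sliding the window of length `3τ - 1`: consecutive windows
with periods at most `τ / 3` share their period, and the sentinel `T[n] = 0`, which occurs nowhere
else, forces the run to break inside `T`.
-/

open scoped Classical

namespace CSA

theorem getD_drop (X : List ℕ) (k i : ℕ) : (X.drop k).getD i 0 = X.getD (k + i) 0 := by
  simp [List.getD_eq_getElem?_getD, List.getElem?_drop]

theorem getD_take {X : List ℕ} {k i : ℕ} (h : i < k) : (X.take k).getD i 0 = X.getD i 0 := by
  simp [List.getD_eq_getElem?_getD, h]

theorem take_eq_take_iff_getD {A B : List ℕ} {k : ℕ} (hA : k ≤ A.length) (hB : k ≤ B.length) :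
    A.take k = B.take k ↔ ∀ i < k, A.getD i 0 = B.getD i 0 := by
  refine ⟨fun h i hi => by rw [← getD_take hi, h, getD_take hi], fun h => ?_⟩
  refine List.ext_getElem (by simp only [List.length_take]; omega) fun i hiA hiB => ?_
  have hik : i < k := by simp only [List.length_take] at hiA; omega
  simpa [List.getD_eq_getElem?_getD, List.getElem?_eq_getElem (Nat.lt_of_lt_of_le hik hA),
    List.getElem?_eq_getElem (Nat.lt_of_lt_of_le hik hB)] using h i hik

theorem lcp_cons (a b : ℕ) (A B : List ℕ) :
    lcp (a :: A) (b :: B) = if a = b then lcp A B + 1 else 0 := by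
  by_cases h : a = b <;> simp [lcp, h]

theorem le_lcp_iff {k : ℕ} {A B : List ℕ} :
    k ≤ lcp A B ↔ k ≤ A.length ∧ k ≤ B.length ∧ A.take k = B.take k := by
  induction k generalizing A B with
  | zero => simp
  | succ k ih =>
    cases A with
    | nil => simp [lcp]
    | cons a A =>
      cases B with
      | nil => simp [lcp]
      | cons b B =>
        rw [lcp_cons]
        by_cases hab : a = b
        · simp [hab, ih]
        · simp [hab]

theorem lcp_comm (A B : List ℕ) : lcp A B = lcp B A := by
  have swap : ∀ A B : List ℕ, lcp A B ≤ lcp B A := fun A B => by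
    obtain ⟨hA, hB, h⟩ := le_lcp_iff.1 (le_refl (lcp A B))
    exact le_lcp_iff.2 ⟨hB, hA, h.symm⟩
  exact le_antisymm (swap A B) (swap B A)

theorem lt_and_lcp_eq_of_take_eq {A B : List ℕ} {k : ℕ} (htake : A.take k = B.take k)
    (hB : k < B.length) (hA : k = A.length ∨ k < A.length ∧ A.getD k 0 < B.getD k 0) :
    A < B ∧ lcp A B = k := by
  induction k generalizing A B with
  | zero =>
    obtain _ | ⟨b, B⟩ := B
    · simp at hB
    obtain _ | ⟨a, A⟩ := A
    · exact ⟨List.nil_lt_cons _ _, rfl⟩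
    · simp only [List.length_cons, List.getD_cons_zero] at hA
      have hab : a < b := by omega
      rw [lcp_cons, if_neg hab.ne]
      exact ⟨List.cons_lt_cons_iff.2 (Or.inl hab), rfl⟩
  | succ k ih =>
    obtain _ | ⟨b, B⟩ := B
    · simp at hB
    obtain _ | ⟨a, A⟩ := A
    · simp at hA
    simp only [List.take_succ_cons, List.cons.injEq] at htake
    obtain ⟨rfl, htake⟩ := htake
    simp only [List.length_cons, List.getD_cons_succ] at hA hB
    obtain ⟨hlt, hlcp⟩ := ih htake (by omega) (by omega)
    rw [lcp_cons, if_pos rfl, hlcp]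
    exact ⟨List.cons_lt_cons_iff.2 (Or.inr ⟨rfl, hlt⟩), rfl⟩

def HasPeriodUpTo (X : List ℕ) (p e : ℕ) : Prop :=
  ∀ i, i + p < e → X.getD i 0 = X.getD (i + p) 0

namespace HasPeriodUpTo

variable {X : List ℕ} {p e : ℕ}

theorem succ (h : HasPeriodUpTo X p e) (hpe : p ≤ e) (heq : X.getD (e - p) 0 = X.getD e 0) :
    HasPeriodUpTo X p (e + 1) := by
  intro i hi
  rcases Nat.lt_or_ge (i + p) e with hlt | hge
  · exact h i hlt
  · obtain rfl : i = e - p := by omega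
    rwa [Nat.sub_add_cancel hpe]

theorem drop (h : HasPeriodUpTo X p e) (k : ℕ) : HasPeriodUpTo (X.drop k) p (e - k) := by
  intro i hi
  rw [getD_drop, getD_drop, ← Nat.add_assoc]
  exact h (k + i) (by omega)

theorem getD_eq_of_agree_window {A B : List ℕ} {f s : ℕ} (hA : HasPeriodUpTo A p e)
    (hB : HasPeriodUpTo B p f) (hp : 0 < p) (hs : s < p) (he : s + p ≤ e) (hf : s + p ≤ f)
    (hwin : ∀ i, s ≤ i → i < s + p → A.getD i 0 = B.getD i 0) :
    ∀ i, i < e → i < f → A.getD i 0 = B.getD i 0 := by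
  have hbase : ∀ i < p, A.getD i 0 = B.getD i 0 := fun i hi => by
    rcases Nat.lt_or_ge i s with his | his
    · rw [hA i (by omega), hB i (by omega)]
      exact hwin (i + p) (by omega) (by omega)
    · exact hwin i his (by omega)
  intro i
  induction i using Nat.strong_induction_on with
  | _ i ih =>
    intro hie hif
    rcases Nat.lt_or_ge i p with hip | hip
    · exact hbase i hip
    · have hi : i - p + p = i := Nat.sub_add_cancel hip
      rw [← hi, ← hA (i - p) (by omega), ← hB (i - p) (by omega)]
      exact ih (i - p) (by omega) (by omega) (by omega)

end HasPeriodUpTo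

theorem isPeriod_take_iff {X : List ℕ} {p k : ℕ} (hk : k ≤ X.length) :
    IsPeriod (X.take k) p ↔ 1 ≤ p ∧ p ≤ k ∧ HasPeriodUpTo X p k := by
  have hlen : (X.take k).length = k := by simp only [List.length_take]; omega
  unfold IsPeriod HasPeriodUpTo
  rw [hlen]
  refine and_congr_right fun _ => and_congr_right fun hpk => forall_congr' fun i => ?_
  refine imp_congr_right fun hi => ?_
  rw [getD_take (by omega), getD_take hi]

section Periodic

variable {τ : ℕ} {X : List ℕ}

theorem Periodic.hasPeriodUpTo (hτ : 1 ≤ τ) (h : Periodic τ X) :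
    0 < perP τ X ∧ HasPeriodUpTo X (perP τ X) (3 * τ - 1) := by
  have hlen : 0 < (X.take (3 * τ - 1)).length := by
    rw [List.length_take]
    have := h.1
    omega
  have hper : IsPeriod (X.take (3 * τ - 1)) (perP τ X) :=
    Nat.sInf_mem (s := {p | IsPeriod _ p}) ⟨_, hlen, le_rfl, fun i hi => by omega⟩
  obtain ⟨hp, -, hX⟩ := (isPeriod_take_iff h.1).1 hper
  exact ⟨hp, hX⟩

theorem periodic_of_hasPeriodUpTo {p : ℕ} (hlen : 3 * τ - 1 ≤ X.length) (hp : 0 < p)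
    (hpτ : 3 * p ≤ τ) (h : HasPeriodUpTo X p (3 * τ - 1)) : Periodic τ X := by
  have hper : IsPeriod (X.take (3 * τ - 1)) p := (isPeriod_take_iff hlen).2 ⟨hp, by omega, h⟩
  exact ⟨hlen, le_trans (Nat.mul_le_mul_left 3 (Nat.sInf_le hper)) hpτ⟩

end Periodic

section Lroot

variable {τ : ℕ} {X P : List ℕ}

theorem Periodic.two_mul_perP_le (h : Periodic τ X) : 2 * perP τ X ≤ 3 * τ - 1 := by
  have := h.2
  omega

theorem exists_window_eq_LrootP (hp : 0 < perP τ X) :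
    ∃ t < perP τ X, (X.drop t).take (perP τ X) = LrootP τ X := by
  set F := (Finset.range (perP τ X)).image fun t => (X.drop t).take (perP τ X)
  have hF : F.Nonempty := Finset.image_nonempty.2 ⟨0, Finset.mem_range.2 hp⟩
  have hroot : LrootP τ X = F.min' hF := by
    rw [LrootP, ← Finset.coe_min' hF]
    rfl
  obtain ⟨t, ht, hwin⟩ := Finset.mem_image.1 (hroot ▸ F.min'_mem hF)
  exact ⟨t, Finset.mem_range.1 ht, hwin⟩

theorem LrootP_spec (hτ : 1 ≤ τ) (h : Periodic τ X) :
    (LrootP τ X).length = perP τ X ∧ LheadP τ X < perP τ X ∧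
      (X.drop (LheadP τ X)).take (perP τ X) = LrootP τ X := by
  obtain ⟨t, ht, hwin⟩ := exists_window_eq_LrootP (h.hasPeriodUpTo hτ).1
  have hhead : LheadP τ X < perP τ X ∧ (X.drop (LheadP τ X)).take (perP τ X) = LrootP τ X :=
    Nat.sInf_mem (s := {s | s < perP τ X ∧ _}) ⟨t, ht, hwin⟩
  refine ⟨?_, hhead⟩
  have := h.1
  have := h.two_mul_perP_le
  rw [← hwin, List.length_take, List.length_drop]
  omega

theorem perP_take : perP τ (X.take (3 * τ - 1)) = perP τ X := by
  rw [perP, List.take_take, min_self, perP]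

theorem take_drop_take {t p N : ℕ} (h : t + p ≤ N) :
    ((X.take N).drop t).take p = (X.drop t).take p := by
  rw [List.drop_take, List.take_take, min_eq_left (by omega)]

theorem LrootP_take (h : 2 * perP τ X ≤ 3 * τ - 1) :
    LrootP τ (X.take (3 * τ - 1)) = LrootP τ X := by
  unfold LrootP
  rw [perP_take]
  congr 2
  refine Finset.image_congr fun t ht => take_drop_take ?_
  simp only [Finset.coe_range, Set.mem_Iio] at ht
  omega

theorem LheadP_take (h : 2 * perP τ X ≤ 3 * τ - 1) :
    LheadP τ (X.take (3 * τ - 1)) = LheadP τ X := by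
  unfold LheadP
  rw [perP_take, LrootP_take h]
  congr 1
  ext s
  exact and_congr_right fun hs => by rw [take_drop_take (by omega)]

theorem perP_LrootP_LheadP_eq_of_take_eq (hP : Periodic τ P)
    (h : X.take (3 * τ - 1) = P.take (3 * τ - 1)) :
    perP τ X = perP τ P ∧ LrootP τ X = LrootP τ P ∧ LheadP τ X = LheadP τ P := by
  have hper : perP τ X = perP τ P := by rw [← perP_take, h, perP_take]
  have hX : 2 * perP τ X ≤ 3 * τ - 1 := hper ▸ hP.two_mul_perP_le
  refine ⟨hper, ?_, ?_⟩
  · rw [← LrootP_take hX, h, LrootP_take hP.two_mul_perP_le]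
  · rw [← LheadP_take hX, h, LheadP_take hP.two_mul_perP_le]

theorem take_eq_of_LrootP_LheadP_eq (hτ : 1 ≤ τ) (hX : Periodic τ X) (hP : Periodic τ P)
    (hroot : LrootP τ X = LrootP τ P) (hhead : LheadP τ X = LheadP τ P) :
    X.take (3 * τ - 1) = P.take (3 * τ - 1) := by
  obtain ⟨hlenX, -, hwinX⟩ := LrootP_spec hτ hX
  obtain ⟨hlenP, hs, hwinP⟩ := LrootP_spec hτ hP
  obtain ⟨hp, hperX⟩ := hX.hasPeriodUpTo hτ
  obtain ⟨-, hperP⟩ := hP.hasPeriodUpTo hτ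
  have hper : perP τ X = perP τ P := by rw [← hlenX, ← hlenP, hroot]
  rw [hper, hhead] at hwinX
  rw [hper] at hperX hp
  have h2p := hP.two_mul_perP_le
  have hwin := (take_eq_take_iff_getD (by rw [List.length_drop]; have := hX.1; omega)
    (by rw [List.length_drop]; have := hP.1; omega)).1 (hwinX.trans (hroot.trans hwinP.symm))
  rw [take_eq_take_iff_getD hX.1 hP.1]
  refine fun i hi => hperX.getD_eq_of_agree_window hperP hp hs (by omega) (by omega)
    (fun i h1 h2 => ?_) i hi hi
  have := hwin (i - LheadP τ P) (by omega)
  rwa [getD_drop, getD_drop, Nat.add_sub_cancel' h1] at this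

theorem le_lcp_iff_LrootP_LheadP_eq (hτ : 1 ≤ τ) (hP : Periodic τ P) :
    3 * τ - 1 ≤ lcp P X ↔
      Periodic τ X ∧ LrootP τ X = LrootP τ P ∧ LheadP τ X = LheadP τ P := by
  rw [le_lcp_iff]
  constructor
  · rintro ⟨-, hX, h⟩
    obtain ⟨hper, hroot, hhead⟩ := perP_LrootP_LheadP_eq_of_take_eq hP h.symm
    exact ⟨⟨hX, hper ▸ hP.2⟩, hroot, hhead⟩
  · rintro ⟨hX, hroot, hhead⟩
    exact ⟨hP.1, hX.1, (take_eq_of_LrootP_LheadP_eq hτ hX hP hroot hhead).symm⟩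

end Lroot

structure IsMaximalRun (X : List ℕ) (p e : ℕ) : Prop where
  le_length : e ≤ X.length
  hasPeriodUpTo : HasPeriodUpTo X p e
  getD_ne : e < X.length → X.getD (e - p) 0 ≠ X.getD e 0

def runType (X : List ℕ) (p e : ℕ) : ℤ :=
  if e < X.length ∧ X.getD (e - p) 0 < X.getD e 0 then 1 else -1

/-- `A` falls below `B` where the earlier of their runs ends. -/
def FallsBelow (A B : List ℕ) (p eA eB : ℕ) : Prop :=
  eA < eB ∧ runType A p eA = -1 ∨ eB < eA ∧ runType B p eB = 1 ∨
    eA = eB ∧ runType A p eA = -1 ∧ runType B p eB = 1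

theorem runType_eq_one_or (X : List ℕ) (p e : ℕ) : runType X p e = 1 ∨ runType X p e = -1 := by
  unfold runType
  split_ifs <;> simp

theorem runType_eq_one_iff {X : List ℕ} {p e : ℕ} :
    runType X p e = 1 ↔ e < X.length ∧ X.getD (e - p) 0 < X.getD e 0 := by
  unfold runType
  by_cases h : e < X.length ∧ X.getD (e - p) 0 < X.getD e 0
  · rw [if_pos h]
    exact iff_of_true rfl h
  · rw [if_neg h]
    exact iff_of_false (by decide) h

namespace IsMaximalRun

variable {X A B : List ℕ} {p e eA eB : ℕ}

theorem end_or_lt_of_runType_eq_neg_one (h : IsMaximalRun X p e) (ht : runType X p e = -1) :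
    e = X.length ∨ e < X.length ∧ X.getD e 0 < X.getD (e - p) 0 := by
  have hne := h.getD_ne
  have hle := h.le_length
  have : ¬(e < X.length ∧ X.getD (e - p) 0 < X.getD e 0) := by
    rw [← runType_eq_one_iff, ht]
    decide
  omega

theorem le_of_hasPeriodUpTo (h : IsMaximalRun X p e) (hpe : p ≤ e) {k : ℕ}
    (hk : HasPeriodUpTo X p k) (hkX : k ≤ X.length) : k ≤ e := by
  by_contra hlt
  refine h.getD_ne (by omega) ?_
  have := hk (e - p) (by omega)
  rwa [Nat.sub_add_cancel hpe] at this

theorem lt_and_lcp_eq (hA : IsMaximalRun A p eA) (hB : IsMaximalRun B p eB) (hp : 0 < p)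
    (hpA : p ≤ eA) (hpB : p ≤ eB) (hagree : ∀ i < min eA eB, A.getD i 0 = B.getD i 0)
    (hbelow : FallsBelow A B p eA eB) : A < B ∧ lcp A B = min eA eB := by
  have htake := (take_eq_take_iff_getD (by have := hA.le_length; omega)
    (by have := hB.le_length; omega)).2 hagree
  refine lt_and_lcp_eq_of_take_eq htake ?_ ?_
  · have := hA.le_length
    have := hB.le_length
    rcases hbelow with ⟨hlt, -⟩ | ⟨hlt, ht⟩ | ⟨-, -, ht⟩
    · omega
    · have := (runType_eq_one_iff.1 ht).1
      omega
    · have := (runType_eq_one_iff.1 ht).1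
      omega
  · rcases hbelow with ⟨hlt, ht⟩ | ⟨hlt, ht⟩ | ⟨rfl, htA, htB⟩
    · have hBe := hB.hasPeriodUpTo (eA - p) (by omega)
      have hAB := hagree (eA - p) (by omega)
      rw [Nat.sub_add_cancel hpA] at hBe
      rw [min_eq_left hlt.le]
      have := hA.end_or_lt_of_runType_eq_neg_one ht
      omega
    · have hAe := hA.hasPeriodUpTo (eB - p) (by omega)
      have hAB := hagree (eB - p) (by omega)
      rw [Nat.sub_add_cancel hpB] at hAe
      rw [min_eq_right hlt.le]
      have := runType_eq_one_iff.1 ht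
      have := hA.le_length
      omega
    · have hAB := hagree (eA - p) (by omega)
      rw [min_self]
      have := runType_eq_one_iff.1 htB
      have := hA.end_or_lt_of_runType_eq_neg_one htA
      omega

theorem compare (hA : IsMaximalRun A p eA) (hB : IsMaximalRun B p eB) (hp : 0 < p)
    (hpA : p ≤ eA) (hpB : p ≤ eB) (hagree : ∀ i < p, A.getD i 0 = B.getD i 0) :
    min eA eB ≤ lcp A B ∧
    (runType A p eA ≠ runType B p eB → (A < B ↔ runType A p eA < runType B p eB)) ∧
    (runType A p eA = -1 → runType B p eB = -1 → eA ≠ eB → (A < B ↔ eA < eB)) ∧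
    (runType A p eA = 1 → runType B p eB = 1 → eA ≠ eB → (A < B ↔ eB < eA)) ∧
    ((runType A p eA ≠ runType B p eB ∨ eA ≠ eB) → A ≠ B ∧ lcp A B = min eA eB) := by
  have hagree' : ∀ i < min eA eB, A.getD i 0 = B.getD i 0 := fun i hi =>
    hA.hasPeriodUpTo.getD_eq_of_agree_window hB.hasPeriodUpTo hp hp (by omega) (by omega)
      (fun i _ hi => hagree i (by omega)) i (by omega) (by omega)
  have hA' := hA.le_length
  have hB' := hB.le_length
  have hlcp : min eA eB ≤ lcp A B := le_lcp_iff.2 ⟨by omega, by omega,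
    (take_eq_take_iff_getD (by omega) (by omega)).2 hagree'⟩
  have hlt := hA.lt_and_lcp_eq hB hp hpA hpB hagree'
  have hgt := hB.lt_and_lcp_eq hA hp hpB hpA (fun i hi => (hagree' i (by omega)).symm)
  rw [lcp_comm, min_comm] at hgt
  have htA := runType_eq_one_or A p eA
  have htB := runType_eq_one_or B p eB
  have hdecided : runType A p eA ≠ runType B p eB ∨ eA ≠ eB →
      (A < B ↔ FallsBelow A B p eA eB) ∧ A ≠ B ∧ lcp A B = min eA eB := by
    intro hne
    by_cases hbelow : FallsBelow A B p eA eB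
    · obtain ⟨hAB, hlcpAB⟩ := hlt hbelow
      exact ⟨iff_of_true hAB hbelow, ne_of_lt hAB, hlcpAB⟩
    · obtain ⟨hBA, hlcpAB⟩ := hgt (by unfold FallsBelow at hbelow ⊢; omega)
      exact ⟨iff_of_false (List.lt_asymm hBA) hbelow, ne_of_gt hBA, hlcpAB⟩
  refine ⟨hlcp, fun hne => ?_, fun h1 h2 hne => ?_, fun h1 h2 hne => ?_,
    fun hne => (hdecided hne).2⟩
  · rw [(hdecided (Or.inl hne)).1, FallsBelow]
    omega
  · rw [(hdecided (Or.inr hne)).1, FallsBelow]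
    omega
  · rw [(hdecided (Or.inr hne)).1, FallsBelow]
    omega

end IsMaximalRun

theorem isMaximalRun_lcp_drop (X : List ℕ) {p : ℕ} (hp : p ≤ X.length) :
    IsMaximalRun X p (p + lcp X (X.drop p)) := by
  set L := lcp X (X.drop p)
  obtain ⟨hLX, hLd, htake⟩ := le_lcp_iff.1 (le_refl L)
  rw [List.length_drop] at hLd
  have hagree := (take_eq_take_iff_getD hLX (by rw [List.length_drop]; omega)).1 htake
  refine ⟨by omega, fun i hi => ?_, fun hlt heq => ?_⟩
  · rw [hagree i (by omega), getD_drop, Nat.add_comm]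
  · have hagree' : ∀ i < L + 1, X.getD i 0 = (X.drop p).getD i 0 := fun i hi => by
      rcases Nat.lt_or_ge i L with hiL | hiL
      · exact hagree i hiL
      · rw [getD_drop, show i = L by omega, ← heq, Nat.add_sub_cancel_left]
    have : L + 1 ≤ L := le_lcp_iff.2 ⟨by omega, by rw [List.length_drop]; omega,
      (take_eq_take_iff_getD (by omega) (by rw [List.length_drop]; omega)).2 hagree'⟩
    omega

theorem Periodic.isMaximalRun_pend {τ : ℕ} {P : List ℕ} (hτ : 1 ≤ τ) (hP : Periodic τ P) :
    IsMaximalRun P (perP τ P) (pend τ P - 1) ∧ 3 * τ - 1 ≤ pend τ P - 1 := by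
  obtain ⟨-, hper⟩ := hP.hasPeriodUpTo hτ
  have hpend : pend τ P - 1 = perP τ P + lcp P (P.drop (perP τ P)) := by
    unfold pend
    omega
  have hrun : IsMaximalRun P (perP τ P) (pend τ P - 1) := by
    rw [hpend]
    exact isMaximalRun_lcp_drop P (by have := hP.1; have := hP.two_mul_perP_le; omega)
  exact ⟨hrun, hrun.le_of_hasPeriodUpTo (by omega) hper hP.1⟩

theorem typP_eq_runType (τ : ℕ) (P : List ℕ) :
    typP τ P = runType P (perP τ P) (pend τ P - 1) := by
  have hpend : 1 ≤ pend τ P := by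
    unfold pend
    omega
  unfold typP runType idx
  simp only [show pend τ P - perP τ P - 1 = pend τ P - 1 - perP τ P by omega,
    show pend τ P ≤ P.length ↔ pend τ P - 1 < P.length by omega]

section Windows

variable {τ k₀ : ℕ} {X : List ℕ}

/-- Consecutive windows of length `3τ - 1` with periods at most `τ / 3` overlap in `3τ - 2`
symbols, so the period of the first window propagates to the end of the last one. -/
theorem hasPeriodUpTo_of_periodic_drop (hτ : 1 ≤ τ) (hk₀ : 0 < k₀)
    (hk : ∀ k < k₀, Periodic τ (X.drop k)) : HasPeriodUpTo X (perP τ X) (k₀ + 3 * τ - 2) := by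
  have hX : Periodic τ X := by simpa only [List.drop_zero] using hk 0 hk₀
  obtain ⟨-, hper⟩ := hX.hasPeriodUpTo hτ
  induction k₀ with
  | zero => omega
  | succ k ih =>
    rcases Nat.eq_zero_or_pos k with rfl | hkpos
    · rwa [show 0 + 1 + 3 * τ - 2 = 3 * τ - 1 by omega]
    have ih := ih hkpos fun i hi => hk i (by omega)
    obtain ⟨hq, hwin⟩ := (hk k (by omega)).hasPeriodUpTo hτ
    have hq3 := (hk k (by omega)).2
    have hp3 := hX.2
    set q := perP τ (X.drop k)
    set p := perP τ X
    have hwin' : ∀ i, k ≤ i → i + q < k + (3 * τ - 1) → X.getD i 0 = X.getD (i + q) 0 :=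
      fun i h1 h2 => by
        have := hwin (i - k) (by omega)
        rwa [getD_drop, getD_drop, ← Nat.add_assoc, Nat.add_sub_cancel' h1] at this
    set a := k + 3 * τ - 2
    rw [show k + 1 + 3 * τ - 2 = a + 1 by omega]
    refine ih.succ (by omega) ?_
    calc X.getD (a - p) 0 = X.getD (a - p - q) 0 := by
          rw [hwin' (a - p - q) (by omega) (by omega), Nat.sub_add_cancel (by omega)]
      _ = X.getD (a - q) 0 := by
          rw [ih (a - p - q) (by omega), show a - p - q + p = a - q by omega]
      _ = X.getD a 0 := by
          rw [hwin' (a - q) (by omega) (by omega), Nat.sub_add_cancel (by omega)]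

theorem isMaximalRun_of_periodic_drop (hτ : 1 ≤ τ) (hk₀ : 0 < k₀)
    (hk : ∀ k < k₀, Periodic τ (X.drop k)) (hnot : ¬Periodic τ (X.drop k₀))
    (hlen : k₀ + 3 * τ - 1 ≤ X.length) : IsMaximalRun X (perP τ X) (k₀ + 3 * τ - 2) := by
  have hX : Periodic τ X := by simpa only [List.drop_zero] using hk 0 hk₀
  obtain ⟨hp, -⟩ := hX.hasPeriodUpTo hτ
  have hp3 := hX.2
  have hrun := hasPeriodUpTo_of_periodic_drop hτ hk₀ hk
  refine ⟨by omega, hrun, fun _ heq => hnot ?_⟩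
  have hwin := (hrun.succ (by omega) heq).drop k₀
  rw [show k₀ + 3 * τ - 2 + 1 - k₀ = 3 * τ - 1 by omega] at hwin
  exact periodic_of_hasPeriodUpTo (by rw [List.length_drop]; omega) hp hp3 hwin

end Windows

section Text

variable {T : List ℕ} {τ j : ℕ}

theorem suf_add (hj : 1 ≤ j) (k : ℕ) : suf T (j + k) = (suf T j).drop k := by
  unfold suf
  rw [List.drop_drop]
  congr 1
  omega

theorem length_suf : (suf T j).length = T.length - (j - 1) := List.length_drop

theorem sub_eq_take_drop_suf (hj : 1 ≤ j) (t k : ℕ) :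
    sub T (j + t) (j + t + k) = ((suf T j).drop t).take k := by
  rw [← suf_add hj, sub, suf, Nat.add_sub_cancel_left]

theorem per_sub_eq_perP : per (sub T j (j + 3 * τ - 1)) = perP τ (suf T j) := by
  rw [sub, perP, suf, show j + 3 * τ - 1 - j = 3 * τ - 1 by omega]

theorem mem_R_iff_periodic (hτ : 1 ≤ τ) (hj : 1 ≤ j) : j ∈ R T τ ↔ Periodic τ (suf T j) := by
  unfold R Periodic
  rw [Set.mem_ofPred_eq, per_sub_eq_perP, length_suf]
  exact ⟨fun ⟨_, h1, h2⟩ => ⟨by omega, h2⟩, fun ⟨h1, h2⟩ => ⟨hj, by omega, h2⟩⟩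

theorem Lroot_eq_LrootP (hj : 1 ≤ j) : Lroot T τ j = LrootP τ (suf T j) := by
  simp only [Lroot, LrootP, per_sub_eq_perP, sub_eq_take_drop_suf hj]

theorem Lhead_eq_LheadP (hj : 1 ≤ j) : Lhead T τ j = LheadP τ (suf T j) := by
  simp only [Lhead, LheadP, per_sub_eq_perP, sub_eq_take_drop_suf hj, Lroot_eq_LrootP hj]

theorem mem_RsH_iff (hτ : 1 ≤ τ) (hj : 1 ≤ j) {s : ℕ} {H : List ℕ} :
    j ∈ RsH T τ s H ↔
      Periodic τ (suf T j) ∧ LrootP τ (suf T j) = H ∧ LheadP τ (suf T j) = s := by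
  rw [RsH, Set.mem_ofPred_eq, mem_R_iff_periodic hτ hj, Lroot_eq_LrootP hj, Lhead_eq_LheadP hj]

theorem typ_eq_runType (hj : 1 ≤ j) (h : j + perP τ (suf T j) ≤ rend T τ j) :
    typ T τ j = runType (suf T j) (perP τ (suf T j)) (rend T τ j - j) := by
  rw [typ, runType, per_sub_eq_perP]
  generalize perP τ (suf T j) = p at h ⊢
  have e1 : (suf T j).getD (rend T τ j - j) 0 = idx T (rend T τ j) := by
    rw [suf, getD_drop, idx]
    congr 1
    omega
  have e2 : (suf T j).getD (rend T τ j - j - p) 0 = idx T (rend T τ j - p) := by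
    rw [suf, getD_drop, idx]
    congr 1
    omega
  have e3 : rend T τ j ≤ T.length ↔ rend T τ j - j < (suf T j).length := by
    rw [length_suf]
    omega
  simp only [e1, e2, e3]

variable {n : ℕ}

theorem last_not_mem_R (hτ : 1 ≤ τ) (hlast : idx T n = 0)
    (huniq : ∀ i, 1 ≤ i → i < n → idx T i ≠ 0) : n + 2 - 3 * τ ∉ R T τ := by
  intro hw
  have hw1 : 1 ≤ n + 2 - 3 * τ := hw.1
  have hX := (mem_R_iff_periodic hτ hw.1).1 hw
  obtain ⟨hq, hper⟩ := hX.hasPeriodUpTo hτ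
  have hq3 := hX.2
  generalize perP τ (suf T (n + 2 - 3 * τ)) = q at hq hper hq3
  have := hper (3 * τ - 2 - q) (by omega)
  rw [suf, getD_drop, getD_drop, show n + 2 - 3 * τ - 1 + (3 * τ - 2 - q) = n - q - 1 by omega,
    show n + 2 - 3 * τ - 1 + (3 * τ - 2 - q + q) = n - 1 by omega] at this
  exact huniq (n - q) (by omega) (by omega) (this.trans hlast)

theorem isMaximalRun_rend (hτ : 1 ≤ τ) (hlen : T.length = n) (hlast : idx T n = 0)
    (huniq : ∀ i, 1 ≤ i → i < n → idx T i ≠ 0) (hj : j ∈ R T τ) :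
    IsMaximalRun (suf T j) (perP τ (suf T j)) (rend T τ j - j) ∧ 3 * τ - 1 ≤ rend T τ j - j := by
  set E := {j' | j ≤ j' ∧ j' ∉ R T τ}
  have hj1 : 1 ≤ j := hj.1
  have hjw : j + 3 * τ ≤ n + 2 := hlen ▸ hj.2.1
  have hwE : n + 2 - 3 * τ ∈ E := ⟨by omega, last_not_mem_R hτ hlast huniq⟩
  have he : sInf E ∈ E := Nat.sInf_mem ⟨_, hwE⟩
  have hew : sInf E ≤ n + 2 - 3 * τ := Nat.sInf_le hwE
  have hje : j < sInf E := lt_of_le_of_ne he.1 fun h => he.2 (h ▸ hj)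
  have hrend : rend T τ j = sInf E + 3 * τ - 2 := rfl
  rw [show rend T τ j - j = (sInf E - j) + 3 * τ - 2 by omega]
  refine ⟨isMaximalRun_of_periodic_drop hτ (by omega) (fun k hk => ?_) ?_ ?_, by omega⟩
  · rw [← suf_add hj1, ← mem_R_iff_periodic hτ (by omega)]
    by_contra h
    exact Nat.notMem_of_lt_sInf (show j + k < sInf E by omega) ⟨by omega, h⟩
  · rw [← suf_add hj1, ← mem_R_iff_periodic hτ (by omega), Nat.add_sub_cancel' he.1]
    exact he.2
  · rw [length_suf]
    omega

end Text

theorem statement_10_general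
    (n τ : ℕ) (T : List ℕ)
    (hτ : 1 ≤ τ)
    (hlen : T.length = n)
    (hlast : idx T n = 0) (huniq : ∀ i, 1 ≤ i → i < n → idx T i ≠ 0)
    (P : List ℕ)
    (hperiodic : Periodic τ P)
    (s : ℕ) (hs : s = LheadP τ P) (H : List ℕ) (hH : H = LrootP τ P) :
    ∀ j, 1 ≤ j → j ≤ n →
      ((3 * τ - 1 ≤ lcp P (suf T j) ↔ j ∈ RsH T τ s H) ∧
       (j ∈ RsH T τ s H → ∀ t t' : ℕ, t = pend τ P - 1 → t' = rend T τ j - j →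
         min t t' ≤ lcp P (suf T j) ∧
         (typP τ P ≠ typ T τ j → (P < suf T j ↔ typP τ P < typ T τ j)) ∧
         (typP τ P = -1 → typ T τ j = -1 → t ≠ t' → (P < suf T j ↔ t < t')) ∧
         (typP τ P = 1 → typ T τ j = 1 → t ≠ t' → (P < suf T j ↔ t' < t)) ∧
         ((typP τ P ≠ typ T τ j ∨ t ≠ t') →
           P ≠ suf T j ∧ lcp P (suf T j) = min t t'))) := by
  intro j hj _
  have hRsH : j ∈ RsH T τ s H ↔ Periodic τ (suf T j) ∧ LrootP τ (suf T j) = H ∧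
      LheadP τ (suf T j) = s := mem_RsH_iff hτ hj
  have hlcp : 3 * τ - 1 ≤ lcp P (suf T j) ↔ j ∈ RsH T τ s H := by
    rw [hRsH, hs, hH]
    exact le_lcp_iff_LrootP_LheadP_eq hτ hperiodic
  refine ⟨hlcp, fun hjs t t' ht ht' => ?_⟩
  obtain ⟨-, -, htake⟩ := le_lcp_iff.1 (hlcp.2 hjs)
  have hper : perP τ (suf T j) = perP τ P :=
    (perP_LrootP_LheadP_eq_of_take_eq hperiodic htake.symm).1
  have hagree : ∀ i < perP τ P, P.getD i 0 = (suf T j).getD i 0 := fun i hi => by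
    have := hperiodic.two_mul_perP_le
    rw [← getD_take (k := 3 * τ - 1) (by omega), htake, getD_take (by omega)]
  obtain ⟨hrunP, hpendP⟩ := hperiodic.isMaximalRun_pend hτ
  obtain ⟨hrunT, hrendT⟩ := isMaximalRun_rend hτ hlen hlast huniq
    ((mem_R_iff_periodic hτ hj).2 (hRsH.1 hjs).1)
  obtain ⟨hp, -⟩ := hperiodic.hasPeriodUpTo hτ
  have hp3 := hperiodic.2
  rw [hper] at hrunT
  subst ht ht'
  rw [typP_eq_runType, typ_eq_runType hj (by omega), hper]
  exact hrunP.compare hrunT hp (by omega) (by omega) hagree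

/-- Lemma: comparing a periodic pattern with the suffixes of `T`. -/
theorem statement_10
    (σ n τ : ℕ) (T : List ℕ)
    (hσ : 2 ≤ σ) (hn : 2 ≤ n) (hτ : 1 ≤ τ)
    (hlen : T.length = n) (halph : ∀ c ∈ T, c < σ)
    (hlast : idx T n = 0) (huniq : ∀ i, 1 ≤ i → i < n → idx T i ≠ 0)
    (P : List ℕ) (m : ℕ) (hm : P.length = m) (halphP : ∀ c ∈ P, c < σ)
    (hperiodic : Periodic τ P)
    (s : ℕ) (hs : s = LheadP τ P) (H : List ℕ) (hH : H = LrootP τ P) :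
    ∀ j, 1 ≤ j → j ≤ n →
      ((3 * τ - 1 ≤ lcp P (suf T j) ↔ j ∈ RsH T τ s H) ∧
       (j ∈ RsH T τ s H → ∀ t t' : ℕ, t = pend τ P - 1 → t' = rend T τ j - j →
         min t t' ≤ lcp P (suf T j) ∧
         (typP τ P ≠ typ T τ j → (P < suf T j ↔ typP τ P < typ T τ j)) ∧
         (typP τ P = -1 → typ T τ j = -1 → t ≠ t' → (P < suf T j ↔ t < t')) ∧
         (typP τ P = 1 → typ T τ j = 1 → t ≠ t' → (P < suf T j ↔ t' < t)) ∧
         ((typP τ P ≠ typ T τ j ∨ t ≠ t') →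
           P ≠ suf T j ∧ lcp P (suf T j) = min t t'))) :=
  statement_10_general n τ T hτ hlen hlast huniq P hperiodic s hs H hH

end CSA
end
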